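/- arXiv:2011.07550 — 4 statements merged into one kernel-verified Lean document; each statement's English description precedes it below -/
import Mathlib

section
/- Let β, γ : ℝ → ℝ be continuous functions with β(z) → β∞ and γ(z) → γ∞ as z → ∞, where γ∞ > 0 and γ is bounded below by a positive constant. Let ρ : ℝ → ℝ be continuous, positive, T-periodic. Define R₀(L) = (∫₀ᵀ∫₀ᴸ β(ρ(t)y) dy dt) / (∫₀ᵀ∫₀ᴸ γ(ρ(t)y) dy dt). Then R₀(L) → β∞/γ∞ as L → ∞. -/
/-!
Substituting `y = L s` writes `∫₀ᵀ ∫₀ᴸ f (ρ t y) dy dt` as `L` times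
`∫₀ᵀ ∫₀¹ f (ρ t L s) ds dt`, so the factors `L` cancel in `R₀(L)`. For `s > 0` we have
`ρ t L s → ∞`, so the integrand tends to `f∞` pointwise, and bounded convergence (applied to the
inner and then to the outer integral) shows that the rescaled double integral tends to `T f∞`,
for `f = β` and `f = γ`.
-/

open MeasureTheory intervalIntegral Filter Topology

theorem tendsto_intervalIntegral_of_abs_le_const {ι : Type*} {l : Filter ι}
    [l.IsCountablyGenerated] {F : ι → ℝ → ℝ} {a b c M : ℝ} (hab : a ≤ b)
    (hF : ∀ i, Continuous (F i)) (hM : ∀ i x, |F i x| ≤ M)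
    (hlim : ∀ x ∈ Set.Ioc a b, Tendsto (fun i => F i x) l (𝓝 c)) :
    Tendsto (fun i => ∫ x in a..b, F i x) l (𝓝 ((b - a) * c)) := by
  have h := intervalIntegral.tendsto_integral_filter_of_dominated_convergence (μ := volume)
    (a := a) (b := b) (f := fun _ => c) (fun _ => M)
    (.of_forall fun i => (hF i).aestronglyMeasurable)
    (.of_forall fun i => .of_forall fun x _ => hM i x) intervalIntegrable_const
    (.of_forall fun x hx => hlim x (by rwa [Set.uIoc_of_le hab] at hx))
  simpa using h

theorem tendsto_integral_unit_comp_mul_atTop {f : ℝ → ℝ} {l M a : ℝ} (hf : Continuous f)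
    (hM : ∀ z, |f z| ≤ M) (hfl : Tendsto f atTop (𝓝 l)) (ha : 0 < a) :
    Tendsto (fun L => ∫ s in (0:ℝ)..1, f (a * (L * s))) atTop (𝓝 l) := by
  have h := tendsto_intervalIntegral_of_abs_le_const (l := atTop) (c := l) zero_le_one
    (fun L => by fun_prop) (fun L s => hM _)
    (fun s hs => hfl.comp ((tendsto_id.atTop_mul_const hs.1).const_mul_atTop ha))
  simpa using h

theorem tendsto_integral_integral_unit_comp_mul_atTop {ρ f : ℝ → ℝ} {T l M : ℝ} (hT : 0 ≤ T)
    (hρ : Continuous ρ) (hρpos : ∀ t, 0 < ρ t) (hf : Continuous f) (hM : ∀ z, |f z| ≤ M)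
    (hfl : Tendsto f atTop (𝓝 l)) :
    Tendsto (fun L => ∫ t in (0:ℝ)..T, ∫ s in (0:ℝ)..1, f (ρ t * (L * s))) atTop
      (𝓝 (T * l)) := by
  have h := tendsto_intervalIntegral_of_abs_le_const (l := atTop) (c := l) hT
    (fun L => continuous_parametric_intervalIntegral_of_continuous' (by fun_prop) 0 1)
    (fun L t => by simpa using norm_integral_le_of_norm_le_const fun s _ => (Real.norm_eq_abs _).trans_le (hM (ρ t * (L * s))))
    (fun t _ => tendsto_integral_unit_comp_mul_atTop hf hM hfl (hρpos t))
  simpa using h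

theorem integral_integral_comp_mul_eq_mul_integral_integral_unit (ρ f : ℝ → ℝ) (T L : ℝ) :
    ∫ t in (0:ℝ)..T, ∫ y in (0:ℝ)..L, f (ρ t * y) =
      L * ∫ t in (0:ℝ)..T, ∫ s in (0:ℝ)..1, f (ρ t * (L * s)) := by
  rw [← intervalIntegral.integral_const_mul]
  congr 1 with t
  simpa using (smul_integral_comp_mul_left (fun y => f (ρ t * y)) L (a := 0) (b := 1)).symm

theorem stmt_4_general (T βinf γinf : ℝ) (hT : 0 < T) (hγinf : 0 < γinf)
    (ρ β γ : ℝ → ℝ)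
    (hρ : Continuous ρ) (hρpos : ∀ t, 0 < ρ t)
    (hβ : Continuous β) (hγ : Continuous γ)
    (hβbd : ∃ M, ∀ z, |β z| ≤ M) (hγbd : ∃ M, ∀ z, |γ z| ≤ M)
    (hβlim : Tendsto β atTop (𝓝 βinf)) (hγlim : Tendsto γ atTop (𝓝 γinf)) :
    Tendsto (fun L : ℝ =>
        (∫ t in (0:ℝ)..T, ∫ y in (0:ℝ)..L, β (ρ t * y)) /
        (∫ t in (0:ℝ)..T, ∫ y in (0:ℝ)..L, γ (ρ t * y)))
      atTop (𝓝 (βinf / γinf)) := by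
  obtain ⟨Mβ, hMβ⟩ := hβbd
  obtain ⟨Mγ, hMγ⟩ := hγbd
  have hβT := tendsto_integral_integral_unit_comp_mul_atTop hT.le hρ hρpos hβ hMβ hβlim
  have hγT := tendsto_integral_integral_unit_comp_mul_atTop hT.le hρ hρpos hγ hMγ hγlim
  have hratio := hβT.div hγT (mul_pos hT hγinf).ne'
  rw [mul_div_mul_left _ _ hT.ne'] at hratio
  refine hratio.congr' ?_
  filter_upwards [eventually_gt_atTop 0] with L hL
  rw [integral_integral_comp_mul_eq_mul_integral_integral_unit,
    integral_integral_comp_mul_eq_mul_integral_integral_unit, mul_div_mul_left _ _ hL.ne', Pi.div_apply]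

theorem stmt_4 (T c βinf γinf : ℝ) (hT : 0 < T) (hc : 0 < c) (hγinf : 0 < γinf)
    (ρ β γ : ℝ → ℝ)
    (hρ : Continuous ρ) (hρpos : ∀ t, 0 < ρ t) (hρper : ∀ t, ρ (t + T) = ρ t)
    (hβ : Continuous β) (hγ : Continuous γ)
    (hβbd : ∃ M, ∀ z, |β z| ≤ M) (hγbd : ∃ M, ∀ z, |γ z| ≤ M)
    (hγlb : ∀ z, c ≤ γ z)
    (hβlim : Tendsto β atTop (𝓝 βinf)) (hγlim : Tendsto γ atTop (𝓝 γinf)) :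
    Tendsto (fun L : ℝ =>
        (∫ t in (0:ℝ)..T, ∫ y in (0:ℝ)..L, β (ρ t * y)) /
        (∫ t in (0:ℝ)..T, ∫ y in (0:ℝ)..L, γ (ρ t * y)))
      atTop (𝓝 (βinf / γinf)) :=
  stmt_4_general T βinf γinf hT hγinf ρ β γ hρ hρpos hβ hγ hβbd hγbd hβlim hγlim
end

section
/- Suppose β, γ, r : ℝ → ℝ are continuous T-periodic, β > 0, and Φ is a positive C¹ T-periodic solution of Φ' = (β/R₀ − γ − r)Φ with R₀ > 1. Set δ = (1/4)(1 − 1/R₀) and let 0 < λ₀ ≤ (3/4)(1 − 1/R₀)·β(t) for all t. Then I(t) = η e^{λ₀ t} Φ(t) (for any η > 0) satisfies I'(t) ≤ (β(t)(1 − δ) − γ(t) − r(t))·I(t), and I(t) → ∞ as t → ∞ if inf Φ > 0. -/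
/-!
The factor `exp (λ₀ t)` adds `λ₀` to the growth rate `β/R₀ - γ - r` of `Φ`, and
`β (1 - δ) - β / R₀ = (3/4)(1 - 1/R₀) β` is exactly the room allowed for `λ₀`.
-/

open MeasureTheory intervalIntegral Filter Topology

theorem hasDerivAt_const_mul_exp_mul_mul {Φ : ℝ → ℝ} {Φ' η lam t : ℝ}
    (hΦ : HasDerivAt Φ Φ' t) :
    HasDerivAt (fun s => η * Real.exp (lam * s) * Φ s)
      (η * Real.exp (lam * t) * (lam * Φ t + Φ')) t := by
  have hexp : HasDerivAt (fun s => Real.exp (lam * s)) (Real.exp (lam * t) * lam) t :=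
    ((hasDerivAt_id t).const_mul lam).exp.congr_deriv (by simp)
  exact ((hexp.const_mul η).mul hΦ).congr_deriv (by ring)

theorem deriv_const_mul_exp_mul_mul_le {Φ : ℝ → ℝ} {a b η lam t : ℝ}
    (hη : 0 ≤ η) (hΦt : 0 ≤ Φ t) (hΦ : HasDerivAt Φ (a * Φ t) t) (hab : lam + a ≤ b) :
    deriv (fun s => η * Real.exp (lam * s) * Φ s) t ≤
      b * (η * Real.exp (lam * t) * Φ t) := by
  rw [(hasDerivAt_const_mul_exp_mul_mul hΦ).deriv]
  have hI : 0 ≤ η * Real.exp (lam * t) * Φ t := by positivity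
  calc η * Real.exp (lam * t) * (lam * Φ t + a * Φ t)
      = (lam + a) * (η * Real.exp (lam * t) * Φ t) := by ring
    _ ≤ b * (η * Real.exp (lam * t) * Φ t) := mul_le_mul_of_nonneg_right hab hI

theorem tendsto_const_mul_exp_mul_mul_atTop {Φ : ℝ → ℝ} {c η lam : ℝ}
    (hη : 0 < η) (hlam : 0 < lam) (hc : 0 < c) (hcΦ : ∀ t, c ≤ Φ t) :
    Tendsto (fun t => η * Real.exp (lam * t) * Φ t) atTop atTop := by
  have hexp : Tendsto (fun t => η * c * Real.exp (lam * t)) atTop atTop :=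
    (Real.tendsto_exp_atTop.comp (tendsto_id.const_mul_atTop hlam)).const_mul_atTop
      (mul_pos hη hc)
  refine tendsto_atTop_mono (fun t => ?_) hexp
  calc η * c * Real.exp (lam * t) = η * Real.exp (lam * t) * c := by ring
    _ ≤ η * Real.exp (lam * t) * Φ t := by gcongr; exact hcΦ t

theorem stmt_11_general (R₀ lam₀ η : ℝ) (hη : 0 < η)
    (β γ r Φ : ℝ → ℝ)
    (hΦ : ContDiff ℝ 1 Φ) (hΦpos : ∀ t, 0 < Φ t)
    (hode : ∀ t, deriv Φ t = (β t / R₀ - γ t - r t) * Φ t)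
    (hlam₀ : 0 < lam₀) (hlam₀le : ∀ t, lam₀ ≤ 3 / 4 * (1 - 1 / R₀) * β t) :
    (∀ t, deriv (fun s => η * Real.exp (lam₀ * s) * Φ s) t ≤
      (β t * (1 - 1 / 4 * (1 - 1 / R₀)) - γ t - r t) *
        (η * Real.exp (lam₀ * t) * Φ t)) ∧
    ((∃ c > (0:ℝ), ∀ t, c ≤ Φ t) →
      Tendsto (fun t => η * Real.exp (lam₀ * t) * Φ t) atTop atTop) := by
  refine ⟨fun t => ?_, fun ⟨c, hc, hcΦ⟩ =>
    tendsto_const_mul_exp_mul_mul_atTop hη hlam₀ hc hcΦ⟩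
  refine deriv_const_mul_exp_mul_mul_le (a := β t / R₀ - γ t - r t) hη.le (hΦpos t).le
    ?_ ?_
  · rw [← hode t]
    exact (hΦ.differentiable one_ne_zero t).hasDerivAt
  · linear_combination hlam₀le t

theorem stmt_11 (T R₀ lam₀ η : ℝ) (hT : 0 < T) (hR₀ : 1 < R₀) (hη : 0 < η)
    (β γ r Φ : ℝ → ℝ)
    (hβ : Continuous β) (hγ : Continuous γ) (hr : Continuous r)
    (hβper : ∀ t, β (t + T) = β t) (hγper : ∀ t, γ (t + T) = γ t)
    (hrper : ∀ t, r (t + T) = r t) (hβpos : ∀ t, 0 < β t)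
    (hrmean : (∫ t in (0:ℝ)..T, r t) = 0)
    (hΦ : ContDiff ℝ 1 Φ) (hΦpos : ∀ t, 0 < Φ t) (hΦper : ∀ t, Φ (t + T) = Φ t)
    (hode : ∀ t, deriv Φ t = (β t / R₀ - γ t - r t) * Φ t)
    (hlam₀ : 0 < lam₀) (hlam₀le : ∀ t, lam₀ ≤ 3 / 4 * (1 - 1 / R₀) * β t) :
    (∀ t, deriv (fun s => η * Real.exp (lam₀ * s) * Φ s) t ≤
      (β t * (1 - 1 / 4 * (1 - 1 / R₀)) - γ t - r t) *
        (η * Real.exp (lam₀ * t) * Φ t)) ∧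
    ((∃ c > (0:ℝ), ∀ t, c ≤ Φ t) →
      Tendsto (fun t => η * Real.exp (lam₀ * t) * Φ t) atTop atTop) :=
  stmt_11_general R₀ lam₀ η hη β γ r Φ hΦ hΦpos hode hlam₀ hlam₀le
end

section
/- Let u, v : ℝ → ℝ be positive C¹ T-periodic solutions of the logistic-type periodic ODE x'(t) = a(t)x(t) − b(t)x(t)², where a, b are continuous T-periodic with b(t) > 0 for all t. Then u = v; i.e., the positive T-periodic solution is unique. -/
/-! The ratio `u / v` of two positive solutions satisfies `(u / v)' = b u (v - u) / v`, the terms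
in `a` cancelling. Being continuous and periodic, `u / v` attains its maximum, where its derivative
vanishes; as `b u > 0` this forces `u = v` there, so `u / v ≤ 1` everywhere. Exchanging the roles of
`u` and `v` gives `u = v`. -/

theorem Function.Periodic.exists_forall_le_of_continuous {α : Type*} [TopologicalSpace α]
    [LinearOrder α] [ClosedIciTopology α] {f : ℝ → α} {c : ℝ} (hp : Function.Periodic f c)
    (hc : c ≠ 0) (hf : Continuous f) : ∃ t₀, ∀ t, f t ≤ f t₀ := by
  obtain ⟨_, ⟨t₀, rfl⟩, hmax⟩ :=
    (hp.compact_of_continuous hc hf).exists_isGreatest (Set.range_nonempty f)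
  exact ⟨t₀, fun t => hmax ⟨t, rfl⟩⟩

theorem hasDerivAt_div_of_logistic {a b u v : ℝ → ℝ} {t : ℝ}
    (hu : HasDerivAt u (a t * u t - b t * u t ^ 2) t)
    (hv : HasDerivAt v (a t * v t - b t * v t ^ 2) t) (hv0 : v t ≠ 0) :
    HasDerivAt (u / v) (b t * u t * (v t - u t) / v t) t :=
  (hu.div hv hv0).congr_deriv (by field_simp; ring)

theorem le_of_logistic_of_periodic {T : ℝ} (hT : T ≠ 0) {a b u v : ℝ → ℝ}
    (hbpos : ∀ t, 0 < b t)
    (hu : ∀ t, HasDerivAt u (a t * u t - b t * u t ^ 2) t) (hupos : ∀ t, 0 < u t)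
    (huper : Function.Periodic u T)
    (hv : ∀ t, HasDerivAt v (a t * v t - b t * v t ^ 2) t) (hvpos : ∀ t, 0 < v t)
    (hvper : Function.Periodic v T) :
    u ≤ v := by
  have hratio t := hasDerivAt_div_of_logistic (hu t) (hv t) (hvpos t).ne'
  obtain ⟨t₀, hmax⟩ := (huper.div hvper).exists_forall_le_of_continuous hT
    (continuous_iff_continuousAt.mpr fun t => (hratio t).continuousAt)
  have hderiv_zero :=
    IsLocalMax.hasDerivAt_eq_zero (Filter.Eventually.of_forall hmax) (hratio t₀)
  have hequal : u t₀ = v t₀ := by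
    simpa [(hbpos t₀).ne', (hupos t₀).ne', (hvpos t₀).ne', sub_eq_zero, eq_comm] using
      hderiv_zero
  intro t
  have hle : u t / v t ≤ 1 := by
    simpa [hequal, (hvpos t₀).ne'] using hmax t
  rwa [div_le_one (hvpos t)] at hle

theorem stmt_12_general (T : ℝ) (hT : 0 < T) (a b u v : ℝ → ℝ)
    (hbpos : ∀ t, 0 < b t)
    (hu : ContDiff ℝ 1 u) (hupos : ∀ t, 0 < u t) (huper : ∀ t, u (t + T) = u t)
    (huode : ∀ t, deriv u t = a t * u t - b t * u t ^ 2)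
    (hv : ContDiff ℝ 1 v) (hvpos : ∀ t, 0 < v t) (hvper : ∀ t, v (t + T) = v t)
    (hvode : ∀ t, deriv v t = a t * v t - b t * v t ^ 2) :
    u = v := by
  have hu' t : HasDerivAt u (a t * u t - b t * u t ^ 2) t :=
    huode t ▸ (hu.differentiable one_ne_zero t).hasDerivAt
  have hv' t : HasDerivAt v (a t * v t - b t * v t ^ 2) t :=
    hvode t ▸ (hv.differentiable one_ne_zero t).hasDerivAt
  exact le_antisymm
    (le_of_logistic_of_periodic hT.ne' hbpos hu' hupos huper hv' hvpos hvper)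
    (le_of_logistic_of_periodic hT.ne' hbpos hv' hvpos hvper hu' hupos huper)

theorem stmt_12 (T : ℝ) (hT : 0 < T) (a b u v : ℝ → ℝ)
    (ha : Continuous a) (hb : Continuous b)
    (haper : ∀ t, a (t + T) = a t) (hbper : ∀ t, b (t + T) = b t)
    (hbpos : ∀ t, 0 < b t)
    (hu : ContDiff ℝ 1 u) (hupos : ∀ t, 0 < u t) (huper : ∀ t, u (t + T) = u t)
    (huode : ∀ t, deriv u t = a t * u t - b t * u t ^ 2)
    (hv : ContDiff ℝ 1 v) (hvpos : ∀ t, 0 < v t) (hvper : ∀ t, v (t + T) = v t)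
    (hvode : ∀ t, deriv v t = a t * v t - b t * v t ^ 2) :
    u = v :=
  stmt_12_general T hT a b u v hbpos hu hupos huper huode hv hvpos hvper hvode
end

section
/- Suppose R₀ > 0 and Φ > 0 is a C¹ T-periodic solution of Φ'(t) + (γ(t) + r(t))Φ(t) = (β(t)/R₀)Φ(t) with β, γ, r continuous T-periodic, ∫₀ᵀ r = 0, γ > 0, β > 0. Then R₀ = (∫₀ᵀ β(t) dt)/(∫₀ᵀ γ(t) dt). -/
/-!
Dividing the equation by `Φ > 0` gives `(log Φ)' = β / R₀ - γ - r`. Integrating over a period,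
the left side vanishes by periodicity of `Φ` and `∫ r` vanishes by hypothesis, so
`(∫ β) / R₀ = ∫ γ`, and `∫ γ > 0` lets us solve for `R₀`.
-/

open MeasureTheory intervalIntegral

theorem integral_logDeriv_eq_sub_log {Φ : ℝ → ℝ} (hΦ : ContDiff ℝ 1 Φ) (hΦ0 : ∀ t, Φ t ≠ 0)
    (a b : ℝ) : ∫ t in a..b, logDeriv Φ t = Real.log (Φ b) - Real.log (Φ a) := by
  have hdiff : Differentiable ℝ Φ := hΦ.differentiable one_ne_zero
  have hcont : Continuous (logDeriv Φ) :=
    (hΦ.continuous_deriv le_rfl).div hdiff.continuous hΦ0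
  exact integral_eq_sub_of_hasDerivAt (fun t _ => (hdiff t).hasDerivAt.log (hΦ0 t))
    (hcont.intervalIntegrable a b)

theorem integral_logDeriv_eq_zero_of_periodic {Φ : ℝ → ℝ} {T : ℝ} (hΦ : ContDiff ℝ 1 Φ)
    (hΦ0 : ∀ t, Φ t ≠ 0) (hper : Function.Periodic Φ T) (a : ℝ) :
    ∫ t in a..a + T, logDeriv Φ t = 0 := by
  rw [integral_logDeriv_eq_sub_log hΦ hΦ0, hper, sub_self]

theorem stmt_17_general (T R₀ : ℝ) (hT : 0 < T) (β γ r Φ : ℝ → ℝ)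
    (hβ : Continuous β) (hγ : Continuous γ) (hr : Continuous r)
    (hγpos : ∀ t, 0 < γ t)
    (hrmean : (∫ t in (0:ℝ)..T, r t) = 0)
    (hΦ : ContDiff ℝ 1 Φ) (hΦpos : ∀ t, 0 < Φ t) (hΦper : ∀ t, Φ (t + T) = Φ t)
    (hode : ∀ t, deriv Φ t + (γ t + r t) * Φ t = β t / R₀ * Φ t) :
    R₀ = (∫ t in (0:ℝ)..T, β t) / (∫ t in (0:ℝ)..T, γ t) := by
  have hΦ0 : ∀ t, Φ t ≠ 0 := fun t => (hΦpos t).ne'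
  have hlogDeriv : ∀ t, logDeriv Φ t = β t / R₀ - γ t - r t := fun t => by
    rw [logDeriv_apply, div_eq_iff (hΦ0 t)]
    linarith [hode t]
  have hperiod : ∫ t in (0:ℝ)..T, (β t / R₀ - γ t - r t) = 0 := by
    simpa only [hlogDeriv, zero_add] using
      integral_logDeriv_eq_zero_of_periodic hΦ hΦ0 hΦper 0
  have hβi := hβ.intervalIntegrable (μ := volume) 0 T
  have hγi := hγ.intervalIntegrable (μ := volume) 0 T
  rw [integral_sub ((hβi.div_const R₀).sub hγi) (hr.intervalIntegrable 0 T),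
    integral_sub (hβi.div_const R₀) hγi, intervalIntegral.integral_div, hrmean, sub_zero,
    sub_eq_zero] at hperiod
  have hγint : 0 < ∫ t in (0:ℝ)..T, γ t := intervalIntegral_pos_of_pos hγi hγpos hT
  have hR₀ : R₀ ≠ 0 := by
    rintro rfl
    simp only [div_zero] at hperiod
    exact hγint.ne hperiod
  rw [eq_div_iff hγint.ne', ← hperiod, mul_div_cancel₀ _ hR₀]

theorem stmt_17 (T R₀ : ℝ) (hT : 0 < T) (hR₀ : 0 < R₀) (β γ r Φ : ℝ → ℝ)
    (hβ : Continuous β) (hγ : Continuous γ) (hr : Continuous r)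
    (hβper : ∀ t, β (t + T) = β t) (hγper : ∀ t, γ (t + T) = γ t)
    (hrper : ∀ t, r (t + T) = r t)
    (hβpos : ∀ t, 0 < β t) (hγpos : ∀ t, 0 < γ t)
    (hrmean : (∫ t in (0:ℝ)..T, r t) = 0)
    (hΦ : ContDiff ℝ 1 Φ) (hΦpos : ∀ t, 0 < Φ t) (hΦper : ∀ t, Φ (t + T) = Φ t)
    (hode : ∀ t, deriv Φ t + (γ t + r t) * Φ t = β t / R₀ * Φ t) :
    R₀ = (∫ t in (0:ℝ)..T, β t) / (∫ t in (0:ℝ)..T, γ t) :=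
  stmt_17_general T R₀ hT β γ r Φ hβ hγ hr hγpos hrmean hΦ hΦpos hΦper hode
end
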